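/- arXiv:2402.05093 — 6 statements merged into one kernel-verified Lean document; each statement's English description precedes it below -/
import Mathlib

section
/- Let F ∈ ℂ[x,y] be a nonconstant polynomial that is quasi-homogeneous of some degree d with respect to positive integer weights (w₁, w₂), and write F = x^A · y^B · S where A, B are the maximal exponents with x^A y^B ∣ F (so x ∤ S and y ∤ S). If the saturation S is squarefree, then every irreducible polynomial that divides both ∂F/∂x and ∂F/∂y is associated to x or to y; equivalently, the greatest common divisor of ∂F/∂x and ∂F/∂y is, up to a unit, a monomial x^α y^β. -/
open MvPolynomial

/-!
By the weighted Euler identity `w₁ x ∂ₓF + w₂ y ∂ᵧF = d F`, with `d ≠ 0` because `F` is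
nonconstant, an irreducible common divisor `q` of the partials divides `F = xᴬ yᴮ S`. If `q`
does not divide the monomial, it divides the squarefree `S` exactly once, and the Leibniz rule
turns `q ∣ ∂ᵢF` into `q ∣ ∂ᵢq`. Comparing degrees in the `i`-th variable gives `∂ᵢq = 0` for
both `i`, so in characteristic zero `q` is constant, which is absurd.
-/

section Derivation

variable {R A : Type*} [CommSemiring R] [CommRing A] [Algebra R A] (D : Derivation R A A)
  {q a b : A}

theorem Prime.dvd_derivation_of_dvd_mul (hq : Prime q) (ha : ¬ q ∣ a) (hb : q ∣ b)
    (h : q ∣ D (a * b)) : q ∣ D b := by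
  rw [Derivation.leibniz, smul_eq_mul, smul_eq_mul] at h
  exact (hq.dvd_or_dvd ((dvd_add_left (dvd_mul_of_dvd_left hb _)).mp h)).resolve_left ha

theorem Prime.dvd_derivation_self_of_squarefree (hq : Prime q) (hb : Squarefree b)
    (hqb : q ∣ b) (h : q ∣ D b) : q ∣ D q := by
  obtain ⟨c, rfl⟩ := hqb
  have hqc : ¬ q ∣ c := fun ⟨e, he⟩ => hq.not_isUnit (hb q ⟨e, by rw [he, mul_assoc]⟩)
  rw [mul_comm] at h
  exact hq.dvd_derivation_of_dvd_mul D hqc dvd_rfl h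

end Derivation

theorem Finsupp.weight_fin_two (w₁ w₂ : ℕ) (m : Fin 2 →₀ ℕ) :
    weight ![w₁, w₂] m = w₁ * m 0 + w₂ * m 1 := by
  simp [weight_apply, sum_fintype, Fin.sum_univ_two, mul_comm]

namespace MvPolynomial

variable {R σ : Type*}

theorem degreeOf_pderiv_lt [CommSemiring R] {i : σ} {p : MvPolynomial σ R}
    (h : pderiv i p ≠ 0) : degreeOf i (pderiv i p) < degreeOf i p := by
  have hsucc : ∀ m ∈ (pderiv i p).support, m i + 1 ≤ degreeOf i p := fun m hm => by
    have hm' : m + Finsupp.single i 1 ∈ p.support := by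
      rw [mem_support_iff, coeff_pderiv] at hm
      exact mem_support_iff.mpr (left_ne_zero_of_mul hm)
    simpa using le_degreeOf_of_mem_support i hm'
  obtain ⟨m, hm⟩ := support_nonempty.mpr h
  rw [degreeOf_lt_iff (by have := hsucc m hm; omega)]
  exact fun m hm => hsucc m hm

theorem pderiv_eq_zero_of_dvd [CommSemiring R] [NoZeroDivisors R] {i : σ}
    {p : MvPolynomial σ R} (h : p ∣ pderiv i p) : pderiv i p = 0 := by
  by_contra hne
  obtain ⟨c, hc⟩ := h
  have hp : p ≠ 0 := left_ne_zero_of_mul (hc ▸ hne)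
  have hc0 : c ≠ 0 := right_ne_zero_of_mul (hc ▸ hne)
  have hlt := degreeOf_pderiv_lt hne
  rw [hc, degreeOf_mul_eq hp hc0] at hlt
  omega

theorem eq_C_of_forall_pderiv_eq_zero [CommSemiring R] [NoZeroDivisors R] [CharZero R]
    {p : MvPolynomial σ R} (h : ∀ i, pderiv i p = 0) : p = C (coeff 0 p) := by
  classical
  ext m
  rw [coeff_C]
  split_ifs with hm
  · rw [hm]
  obtain ⟨i, hi⟩ : ∃ i, m i ≠ 0 := by
    by_contra! hm'
    exact hm (Finsupp.ext hm').symm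
  have key := coeff_pderiv (i := i) p (m - Finsupp.single i 1)
  rw [h, coeff_zero, tsub_add_cancel_of_le
    (Finsupp.single_le_iff.mpr (Nat.one_le_iff_ne_zero.mpr hi))] at key
  exact (mul_eq_zero.mp key.symm).resolve_right (Nat.cast_add_one_ne_zero _)

theorem _root_.Irreducible.exists_pderiv_ne_zero {K : Type*} [Field K] [CharZero K]
    {p : MvPolynomial σ K} (hp : Irreducible p) : ∃ i, pderiv i p ≠ 0 := by
  by_contra! h
  have hC := eq_C_of_forall_pderiv_eq_zero h
  have hc : coeff 0 p ≠ 0 := fun h0 => hp.ne_zero (by rw [hC, h0, map_zero])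
  exact hp.not_isUnit (hC ▸ (isUnit_iff_ne_zero.mpr hc).map C)

theorem IsWeightedHomogeneous.totalDegree_eq_zero [CommSemiring R] {w : σ → ℕ}
    {p : MvPolynomial σ R} (hw : ∀ i, w i ≠ 0) (h : p.IsWeightedHomogeneous w 0) :
    p.totalDegree = 0 :=
  (totalDegree_eq_zero_iff σ p).mpr <|
    (weightedTotalDegree_eq_zero_iff (nonTorsionWeight_of hw) p).mp
      (isWeightedHomogeneous_zero_iff_weightedTotalDegree_eq_zero.mp h)

theorem IsWeightedHomogeneous.dvd_of_forall_dvd_pderiv [Fintype σ] {K : Type*} [Field K]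
    [CharZero K] {w : σ → ℕ} {d : ℕ} {p q : MvPolynomial σ K} (h : p.IsWeightedHomogeneous w d)
    (hd : d ≠ 0) (hq : ∀ i, q ∣ pderiv i p) : q ∣ p := by
  have hdp : q ∣ C (d : K) * p := by
    rw [← smul_eq_C_mul, Nat.cast_smul_eq_nsmul, ← h.sum_weight_X_mul_pderiv]
    exact Finset.dvd_sum fun i _ => dvd_nsmul_of_dvd _ ((hq i).mul_left _)
  exact ((isUnit_iff_ne_zero.mpr (Nat.cast_ne_zero.mpr hd)).map C).dvd_mul_left.mp hdp

end MvPolynomial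

theorem common_irreducible_divisor_of_partials_is_variable_general
    (w₁ w₂ d : ℕ) (hw₁ : 0 < w₁) (hw₂ : 0 < w₂)
    (F S : MvPolynomial (Fin 2) ℂ) (A B : ℕ)
    (hF_nonconst : F.totalDegree ≠ 0)
    (hqh : ∀ m ∈ F.support, w₁ * m 0 + w₂ * m 1 = d)
    (hfac : F = X 0 ^ A * X 1 ^ B * S)
    (hsqf : Squarefree S) :
    ∀ q : MvPolynomial (Fin 2) ℂ, Irreducible q →
      q ∣ pderiv 0 F → q ∣ pderiv 1 F →
      Associated q (X 0) ∨ Associated q (X 1) := by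
  intro q hq hq₀ hq₁
  have hqp : Prime q := hq.prime
  have hF : F.IsWeightedHomogeneous ![w₁, w₂] d := fun m hm =>
    (Finsupp.weight_fin_two w₁ w₂ m).trans (hqh m (mem_support_iff.mpr hm))
  have hd : d ≠ 0 := by
    rintro rfl
    exact hF_nonconst (hF.totalDegree_eq_zero (by simp [Fin.forall_fin_two, hw₁.ne', hw₂.ne']))
  have hq_pderiv : ∀ i, q ∣ pderiv i F := Fin.forall_fin_two.mpr ⟨hq₀, hq₁⟩
  have hqF : q ∣ X 0 ^ A * X 1 ^ B * S := hfac ▸ hF.dvd_of_forall_dvd_pderiv hd hq_pderiv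
  by_cases hqM : q ∣ X 0 ^ A * X 1 ^ B
  · exact (hqp.dvd_or_dvd hqM).imp
      (fun h => hqp.associated_of_dvd X_prime (hqp.dvd_of_dvd_pow h))
      (fun h => hqp.associated_of_dvd X_prime (hqp.dvd_of_dvd_pow h))
  have hqS : q ∣ S := (hqp.dvd_or_dvd hqF).resolve_left hqM
  obtain ⟨i, hi⟩ := hq.exists_pderiv_ne_zero
  refine absurd (pderiv_eq_zero_of_dvd ?_) hi
  refine hqp.dvd_derivation_self_of_squarefree (pderiv i) hsqf hqS ?_
  exact hqp.dvd_derivation_of_dvd_mul (pderiv i) hqM hqS (hfac ▸ hq_pderiv i)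

/-- Single-facet case of Lemma 4.1 (zeroSum): if `F ∈ ℂ[x,y]` is a nonconstant
quasi-homogeneous polynomial with squarefree saturation `S`, then every irreducible
common divisor of the two partial derivatives is associated to `x` or to `y`. -/
theorem common_irreducible_divisor_of_partials_is_variable
    (w₁ w₂ d : ℕ) (hw₁ : 0 < w₁) (hw₂ : 0 < w₂)
    (F S : MvPolynomial (Fin 2) ℂ) (A B : ℕ)
    (hF_nonconst : F.totalDegree ≠ 0)
    (hqh : ∀ m ∈ F.support, w₁ * m 0 + w₂ * m 1 = d)
    (hfac : F = X 0 ^ A * X 1 ^ B * S)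
    (hxS : ¬ X 0 ∣ S) (hyS : ¬ X 1 ∣ S)
    (hsqf : Squarefree S) :
    ∀ q : MvPolynomial (Fin 2) ℂ, Irreducible q →
      q ∣ pderiv 0 F → q ∣ pderiv 1 F →
      Associated q (X 0) ∨ Associated q (X 1) :=
  common_irreducible_divisor_of_partials_is_variable_general w₁ w₂ d hw₁ hw₂ F S A B hF_nonconst hqh
    hfac hsqf
end

section
/- For every integer p ≥ 2, the polynomial f = x^p·y + x·y^p ∈ ℂ[x,y] has Milnor number p²; that is, the quotient ring ℂ[x,y]/⟨∂f/∂x, ∂f/∂y⟩ is a ℂ-vector space of dimension exactly p². -/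
/-!
Write `p = n + 2`. The Jacobian ideal `J` is generated by the two forms
`g₁ = p x^(p-1) y + y^p` and `g₂ = x^p + p x y^(p-1)` of degree `p`.

Upper bound: `x g₁ - p y g₂ = (1 - p²) x y^p`, so `x y^p`, and symmetrically `x^p y`, lie in `J`,
and then so does `y^(2p-1)`. With `x^(p-1) y ≡ -y^p / p` and `x^p ≡ -p x y^(p-1)` every monomial
becomes, modulo `J`, a multiple of one of the `p²` monomials `x^i y^j` (`i ≤ p-2`, `j ≤ p-1`),
`x^(p-1)` and `y^j` (`p ≤ j ≤ 2p-2`).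

Lower bound, valid for any two forms of degree `p`: since `J` is generated by forms of degree `p`,
an element of `J` of degree `≤ 2p-2` is `u g₁ + v g₂` with `deg u, deg v ≤ p-2`. So the
`p(2p-1)`-dimensional space of polynomials of degree `≤ 2p-2` meets `J` in dimension at most
`2 · p(p-1)/2`, and its image in the quotient has dimension at least `p²`.
-/

open MvPolynomial Module Finset

namespace MvPolynomial

section CommRing

variable {σ R : Type*} [CommRing R]

theorem eq_zero_of_mem_restrictTotalDegree_of_mem_pow_idealOfVars {k : ℕ} {p : MvPolynomial σ R}
    (hdeg : p ∈ restrictTotalDegree σ R k) (hp : p ∈ idealOfVars σ R ^ (k + 1)) : p = 0 := by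
  rw [mem_restrictTotalDegree] at hdeg
  rw [mem_pow_idealOfVars_iff] at hp
  refine support_eq_empty.mp (eq_empty_of_forall_notMem fun s hs => ?_)
  have hle : s.degree ≤ k := (le_totalDegree hs).trans hdeg
  have := hp s hs
  omega

theorem IsHomogeneous.mem_pow_idealOfVars {g : MvPolynomial σ R} {n : ℕ} (hg : g.IsHomogeneous n) :
    g ∈ idealOfVars σ R ^ n :=
  (mem_pow_idealOfVars_iff n g).mpr fun s hs =>
    (not_imp_comm.mp (hg.coeff_eq_zero (d := s)) (mem_support_iff.mp hs)).ge

theorem exists_mem_restrictTotalDegree_sub_mem_pow_idealOfVars (u : MvPolynomial σ R) (k : ℕ) :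
    ∃ u' ∈ restrictTotalDegree σ R k, u - u' ∈ idealOfVars σ R ^ (k + 1) := by
  classical
  set u' := ∑ d ∈ range (k + 1), homogeneousComponent d u
  have hcoeff : ∀ s, coeff s u' = if s.degree < k + 1 then coeff s u else 0 := fun s => by
    simp [u', coeff_sum, coeff_homogeneousComponent, Finset.sum_ite_eq]
  refine ⟨u', ?_, ?_⟩
  · rw [mem_restrictTotalDegree, totalDegree, Finset.sup_le_iff]
    intro s hs
    have := mem_support_iff.mp hs
    rw [hcoeff] at this
    split_ifs at this with h
    · exact Nat.lt_succ_iff.mp h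
    · exact absurd rfl this
  · rw [mem_pow_idealOfVars_iff']
    intro s hs
    rw [coeff_sub, hcoeff, if_pos hs, sub_self]

theorem exists_mem_restrictTotalDegree_of_mem_span_pair {n : ℕ} {g₁ g₂ : MvPolynomial σ R}
    (hg₁ : g₁.IsHomogeneous (n + 2)) (hg₂ : g₂.IsHomogeneous (n + 2)) {h : MvPolynomial σ R}
    (hdeg : h ∈ restrictTotalDegree σ R (2 * n + 2)) (hJ : h ∈ Ideal.span {g₁, g₂}) :
    ∃ u ∈ restrictTotalDegree σ R n, ∃ v ∈ restrictTotalDegree σ R n, u * g₁ + v * g₂ = h := by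
  obtain ⟨u, v, rfl⟩ := Ideal.mem_span_pair.mp hJ
  obtain ⟨u', hu', hu⟩ := exists_mem_restrictTotalDegree_sub_mem_pow_idealOfVars u n
  obtain ⟨v', hv', hv⟩ := exists_mem_restrictTotalDegree_sub_mem_pow_idealOfVars v n
  have hmul : ∀ {w g : MvPolynomial σ R}, w ∈ restrictTotalDegree σ R n →
      g.IsHomogeneous (n + 2) → w * g ∈ restrictTotalDegree σ R (2 * n + 2) := fun hw hg => by
    rw [mem_restrictTotalDegree] at hw ⊢
    exact (totalDegree_mul _ _).trans (by linarith [hg.totalDegree_le])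
  refine ⟨u', hu', v', hv', (sub_eq_zero.mp ?_).symm⟩
  apply eq_zero_of_mem_restrictTotalDegree_of_mem_pow_idealOfVars (k := 2 * n + 2)
  · exact sub_mem hdeg (add_mem (hmul hu' hg₁) (hmul hv' hg₂))
  · have key : u * g₁ + v * g₂ - (u' * g₁ + v' * g₂) = (u - u') * g₁ + (v - v') * g₂ := by ring
    rw [key, show 2 * n + 2 + 1 = (n + 1) + (n + 2) by ring, pow_add]
    exact add_mem (Ideal.mul_mem_mul hu hg₁.mem_pow_idealOfVars)
      (Ideal.mul_mem_mul hv hg₂.mem_pow_idealOfVars)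

end CommRing

variable {K : Type*} [Field K]

theorem two_mul_finrank_restrictTotalDegree_fin_two (m : ℕ) :
    2 * finrank K (restrictTotalDegree (Fin 2) K m) = (m + 1) * (m + 2) := by
  rw [restrictTotalDegree, finrank_eq_nat_card_basis (basisRestrictSupport K _)]
  have hset : {s : Fin 2 →₀ ℕ | (s.sum fun _ e => e) ≤ m}
      = ↑((range (m + 1)).biUnion fun d => (univ : Finset (Fin 2)).finsuppAntidiag d) := by
    ext s
    simp [mem_finsuppAntidiag, Finsupp.sum_fintype]
  rw [hset, Nat.card_coe_set_eq, Set.ncard_coe_finset, card_biUnion]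
  · have hcard : ∀ d, ((univ : Finset (Fin 2)).finsuppAntidiag d).card = d + 1 := fun d => by
      rw [card_finsuppAntidiag_nat_eq_choose, card_univ, Fintype.card_fin,
        show 2 + d - 1 = d + 1 by omega, Nat.choose_succ_self_right]
    simp only [hcard]
    have := sum_range_id_mul_two (m + 2)
    rw [sum_range_succ', add_zero, show m + 2 - 1 = m + 1 by omega] at this
    linarith
  · intro d _ e _ hde
    refine disjoint_left.mpr fun s hd he => hde ?_
    rw [mem_finsuppAntidiag] at hd he
    rw [← hd.1, he.1]

theorem sq_le_finrank_quotient_span_pair {n : ℕ} {g₁ g₂ : MvPolynomial (Fin 2) K}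
    (hg₁ : g₁.IsHomogeneous (n + 2)) (hg₂ : g₂.IsHomogeneous (n + 2))
    [FiniteDimensional K (MvPolynomial (Fin 2) K ⧸ Ideal.span {g₁, g₂})] :
    (n + 2) ^ 2 ≤ finrank K (MvPolynomial (Fin 2) K ⧸ Ideal.span {g₁, g₂}) := by
  set V := restrictTotalDegree (Fin 2) K (2 * n + 2)
  set W := restrictTotalDegree (Fin 2) K n
  let φ := (Ideal.Quotient.mkₐ K (Ideal.span {g₁, g₂})).toLinearMap ∘ₗ V.subtype
  let ψ : W × W →ₗ[K] MvPolynomial (Fin 2) K :=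
    (LinearMap.mulRight K g₁ ∘ₗ W.subtype).coprod (LinearMap.mulRight K g₂ ∘ₗ W.subtype)
  have hker : (LinearMap.ker φ).map V.subtype ≤ LinearMap.range ψ := by
    rintro _ ⟨h, hh, rfl⟩
    obtain ⟨u, hu, v, hv, huv⟩ := exists_mem_restrictTotalDegree_of_mem_span_pair hg₁ hg₂ h.2
      (Ideal.Quotient.eq_zero_iff_mem.mp hh)
    exact ⟨(⟨u, hu⟩, ⟨v, hv⟩), huv⟩
  have hker_le : finrank K (LinearMap.ker φ) ≤ 2 * finrank K W := calc
    finrank K (LinearMap.ker φ) = finrank K ((LinearMap.ker φ).map V.subtype) :=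
      (LinearEquiv.finrank_eq (Submodule.equivMapOfInjective _ V.injective_subtype _))
    _ ≤ finrank K (LinearMap.range ψ) := Submodule.finrank_mono hker
    _ ≤ finrank K (W × W) := LinearMap.finrank_range_le ψ
    _ = 2 * finrank K W := by rw [finrank_prod]; ring
  have hrange := Submodule.finrank_le (LinearMap.range φ)
  have hrank := LinearMap.finrank_range_add_finrank_ker φ
  have hV := two_mul_finrank_restrictTotalDegree_fin_two (K := K) (2 * n + 2)
  have hW := two_mul_finrank_restrictTotalDegree_fin_two (K := K) n
  nlinarith

end MvPolynomial

namespace MilnorXpYXYp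

def stdExponents (n : ℕ) : Finset (ℕ × ℕ) :=
  range (n + 1) ×ˢ range (n + 2) ∪ {(n + 1, 0)} ∪ (Ioc (n + 1) (2 * n + 2)).image ((0, ·))

theorem mem_stdExponents {n i j : ℕ} :
    (i, j) ∈ stdExponents n ↔
      i ≤ n ∧ j ≤ n + 1 ∨ i = n + 1 ∧ j = 0 ∨ i = 0 ∧ n + 1 < j ∧ j ≤ 2 * n + 2 := by
  simp only [stdExponents, mem_union, mem_product, mem_range, mem_singleton, Prod.mk.injEq,
    mem_image, mem_Ioc]
  constructor
  · rintro ((h | h) | ⟨k, hk, rfl, rfl⟩) <;> omega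
  · rintro (h | h | ⟨rfl, h⟩)
    · exact Or.inl (Or.inl (by omega))
    · exact Or.inl (Or.inr h)
    · exact Or.inr ⟨j, h, rfl, rfl⟩

theorem card_stdExponents_le (n : ℕ) : #(stdExponents n) ≤ (n + 2) ^ 2 := by
  calc #(stdExponents n)
      ≤ #(range (n + 1) ×ˢ range (n + 2)) + #{(n + 1, 0)} + #(Ioc (n + 1) (2 * n + 2)) :=
        (card_union_le _ _).trans (add_le_add (card_union_le _ _) card_image_le)
    _ = (n + 2) ^ 2 := by
      rw [card_product, card_range, card_range, card_singleton, Nat.card_Ioc,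
        show 2 * n + 2 - (n + 1) = n + 1 by omega]
      ring

section Relations

variable (K : Type*) {A : Type*} [Field K] [CommRing A] [Algebra K A]

def stdSpan (a b : A) (n : ℕ) : Submodule K A :=
  Submodule.span K (Set.range fun e : stdExponents n => a ^ e.1.1 * b ^ e.1.2)

variable {K} {c : K} {n : ℕ} {a b : A}

theorem pow_mul_pow_mem_stdSpan_of_mem {i j : ℕ} (h : (i, j) ∈ stdExponents n) :
    a ^ i * b ^ j ∈ stdSpan K a b n :=
  Submodule.subset_span ⟨⟨_, h⟩, rfl⟩

theorem mul_pow_eq_zero_of_relations (hc2 : c ^ 2 ≠ 1)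
    (h₁ : c • (a ^ (n + 1) * b) + b ^ (n + 2) = 0) (h₂ : a ^ (n + 2) + c • (a * b ^ (n + 1)) = 0) :
    a * b ^ (n + 2) = 0 := by
  have : (1 - c ^ 2) • (a * b ^ (n + 2)) = 0 := by
    simp only [Algebra.smul_def, map_sub, map_one, map_pow] at h₁ h₂ ⊢
    linear_combination a * h₁ - algebraMap K A c * b * h₂
  exact (smul_eq_zero.mp this).resolve_left (sub_ne_zero.mpr (Ne.symm hc2))

theorem pow_eq_zero_of_relations (hc2 : c ^ 2 ≠ 1)
    (h₁ : c • (a ^ (n + 1) * b) + b ^ (n + 2) = 0) (h₂ : a ^ (n + 2) + c • (a * b ^ (n + 1)) = 0) :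
    b ^ (2 * n + 3) = 0 := by
  have : c • (a ^ n * (a * b ^ (n + 2))) = -b ^ (2 * n + 3) := by
    rw [Algebra.smul_def] at h₁ ⊢
    linear_combination b ^ (n + 1) * h₁
  rwa [mul_pow_eq_zero_of_relations hc2 h₁ h₂, mul_zero, smul_zero, zero_eq_neg] at this

theorem pow_mul_pow_mem_stdSpan_of_pos (hc : c ≠ 0) (hc2 : c ^ 2 ≠ 1)
    (h₁ : c • (a ^ (n + 1) * b) + b ^ (n + 2) = 0) (h₂ : a ^ (n + 2) + c • (a * b ^ (n + 1)) = 0)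
    (i : ℕ) {j : ℕ} (hj : 1 ≤ j) : a ^ i * b ^ j ∈ stdSpan K a b n := by
  have hzero : ∀ {d : A}, d = 0 → d ∣ a ^ i * b ^ j → a ^ i * b ^ j ∈ stdSpan K a b n :=
    fun hd hdvd => by subst hd; rw [eq_zero_of_zero_dvd hdvd]; exact zero_mem _
  have hab := mul_pow_eq_zero_of_relations hc2 h₁ h₂
  have hba : a ^ (n + 2) * b = 0 := by
    rw [mul_comm]
    exact mul_pow_eq_zero_of_relations hc2 (by rw [mul_comm, add_comm]; exact h₂)
      (by rw [mul_comm, add_comm]; exact h₁)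
  rcases lt_trichotomy i (n + 1) with hi | rfl | hi
  · by_cases hjn : j ≤ n + 1
    · exact pow_mul_pow_mem_stdSpan_of_mem (mem_stdExponents.mpr (by omega))
    rcases Nat.eq_zero_or_pos i with rfl | hi0
    · by_cases hj2 : j ≤ 2 * n + 2
      · exact pow_mul_pow_mem_stdSpan_of_mem (mem_stdExponents.mpr (by omega))
      · exact hzero (pow_eq_zero_of_relations hc2 h₁ h₂)
          (dvd_mul_of_dvd_right (pow_dvd_pow b (by omega)) _)
    · exact hzero hab (mul_dvd_mul (dvd_pow_self a hi0.ne') (pow_dvd_pow b (by omega)))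
  · by_cases hjn : j ≤ n + 1
    · obtain ⟨k, rfl⟩ := Nat.exists_eq_add_of_le' hj
      have hinv : algebraMap K A c⁻¹ * algebraMap K A c = 1 := by
        rw [← map_mul, inv_mul_cancel₀ hc, map_one]
      have : a ^ (n + 1) * b ^ (k + 1) = -c⁻¹ • (a ^ 0 * b ^ (n + 2 + k)) := by
        rw [Algebra.smul_def] at h₁ ⊢
        rw [map_neg]
        linear_combination algebraMap K A c⁻¹ * b ^ k * h₁ - a ^ (n + 1) * b ^ (k + 1) * hinv
      rw [this]
      exact Submodule.smul_mem _ _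
        (pow_mul_pow_mem_stdSpan_of_mem (mem_stdExponents.mpr (by omega)))
    · exact hzero hab (mul_dvd_mul (dvd_pow_self a (by omega)) (pow_dvd_pow b (by omega)))
  · exact hzero hba (mul_dvd_mul (pow_dvd_pow a (by omega)) (dvd_pow_self b (by omega)))

theorem pow_mul_pow_mem_stdSpan (hc : c ≠ 0) (hc2 : c ^ 2 ≠ 1)
    (h₁ : c • (a ^ (n + 1) * b) + b ^ (n + 2) = 0) (h₂ : a ^ (n + 2) + c • (a * b ^ (n + 1)) = 0)
    (i j : ℕ) : a ^ i * b ^ j ∈ stdSpan K a b n := by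
  rcases Nat.eq_zero_or_pos j with rfl | hj
  · by_cases hi : i ≤ n + 1
    · exact pow_mul_pow_mem_stdSpan_of_mem (mem_stdExponents.mpr (by omega))
    obtain ⟨k, rfl⟩ := Nat.exists_eq_add_of_le (show n + 2 ≤ i by omega)
    have : a ^ (n + 2 + k) * b ^ 0 = -c • (a ^ (k + 1) * b ^ (n + 1)) := by
      rw [Algebra.smul_def] at h₂ ⊢
      rw [map_neg]
      linear_combination a ^ k * h₂
    rw [this]
    exact Submodule.smul_mem _ _ (pow_mul_pow_mem_stdSpan_of_pos hc hc2 h₁ h₂ _ (by omega))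
  · exact pow_mul_pow_mem_stdSpan_of_pos hc hc2 h₁ h₂ i hj

end Relations

variable {K : Type*} [Field K]

theorem stdSpan_mk_eq_top {c : K} (hc : c ≠ 0) (hc2 : c ^ 2 ≠ 1) {n : ℕ}
    {I : Ideal (MvPolynomial (Fin 2) K)} (h₁ : C c * X 0 ^ (n + 1) * X 1 + X 1 ^ (n + 2) ∈ I)
    (h₂ : X 0 ^ (n + 2) + C c * X 0 * X 1 ^ (n + 1) ∈ I) :
    stdSpan K (Ideal.Quotient.mk I (X 0)) (Ideal.Quotient.mk I (X 1)) n = ⊤ := by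
  set π := Ideal.Quotient.mkₐ K I
  have hrel : ∀ {g : MvPolynomial (Fin 2) K}, g ∈ I → π g = 0 := Ideal.Quotient.eq_zero_iff_mem.mpr
  have hmem : ∀ i j, π (X 0 ^ i * X 1 ^ j) ∈ stdSpan K (π (X 0)) (π (X 1)) n := by
    intro i j
    rw [map_mul, map_pow, map_pow]
    refine pow_mul_pow_mem_stdSpan hc hc2 ?_ ?_ i j
    · have hg := hrel h₁
      rwa [mul_assoc, C_mul', map_add, map_smul, map_mul, map_pow, map_pow] at hg
    · have hg := hrel h₂
      rwa [mul_assoc, C_mul', map_add, map_smul, map_mul, map_pow, map_pow] at hg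
  rw [eq_top_iff]
  rintro q -
  obtain ⟨p, rfl⟩ := Ideal.Quotient.mkₐ_surjective K I q
  induction p using MvPolynomial.induction_on' with
  | monomial s r =>
    rw [monomial_eq, Finsupp.prod_fintype _ _ (by simp), Fin.prod_univ_two, C_mul', map_smul]
    exact Submodule.smul_mem _ _ (hmem _ _)
  | add p q hp hq => rw [map_add]; exact add_mem hp hq

theorem finrank_quotient_span_eq {c : K} (hc : c ≠ 0) (hc2 : c ^ 2 ≠ 1) (n : ℕ) :
    finrank K (MvPolynomial (Fin 2) K ⧸ Ideal.span {C c * X 0 ^ (n + 1) * X 1 + X 1 ^ (n + 2),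
      X 0 ^ (n + 2) + C c * X 0 * X 1 ^ (n + 1)}) = (n + 2) ^ 2 := by
  set J : Ideal (MvPolynomial (Fin 2) K) := Ideal.span {C c * X 0 ^ (n + 1) * X 1 + X 1 ^ (n + 2),
    X 0 ^ (n + 2) + C c * X 0 * X 1 ^ (n + 1)}
  have hspan := stdSpan_mk_eq_top hc hc2 (n := n) (I := J) (Ideal.subset_span (by simp))
    (Ideal.subset_span (by simp))
  have : FiniteDimensional K (MvPolynomial (Fin 2) K ⧸ J) :=
    Module.finite_def.mpr (hspan ▸ Submodule.fg_span (Set.finite_range _))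
  refine le_antisymm ?_ (sq_le_finrank_quotient_span_pair ?_ ?_)
  · exact ((finrank_le_of_span_eq_top hspan).trans_eq (Fintype.card_coe _)).trans
      (card_stdExponents_le n)
  · exact (((isHomogeneous_X_pow _ _).C_mul c).mul (isHomogeneous_X K 1)).add
      (isHomogeneous_X_pow _ _)
  · have h := ((isHomogeneous_X K 0).C_mul c).mul (isHomogeneous_X_pow (1 : Fin 2) (n + 1))
    rw [add_comm 1] at h
    exact (isHomogeneous_X_pow _ _).add h

end MilnorXpYXYp

/-- Case (1.f) of the proof of Lemma 4.4: the polynomial `f = x^p y + x y^p`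
has Milnor number `p²`. -/
theorem milnor_number_xpy_xyp (p : ℕ) (hp : 2 ≤ p)
    (f : MvPolynomial (Fin 2) ℂ) (hf : f = X 0 ^ p * X 1 + X 0 * X 1 ^ p) :
    Module.finrank ℂ
      (MvPolynomial (Fin 2) ℂ ⧸ Ideal.span {pderiv 0 f, pderiv 1 f}) = p ^ 2 := by
  obtain ⟨n, rfl⟩ : ∃ n, p = n + 2 := ⟨p - 2, by omega⟩
  set c : ℂ := ((n + 2 : ℕ) : ℂ)
  have hc : c ≠ 0 := Nat.cast_ne_zero.mpr (by omega)
  have hc2 : c ^ 2 ≠ 1 := by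
    rw [← Nat.cast_pow, Ne, Nat.cast_eq_one]
    nlinarith
  have h₀ : pderiv 0 f = C c * X 0 ^ (n + 1) * X 1 + X 1 ^ (n + 2) := by
    simp only [hf, c, map_add, Derivation.leibniz, Derivation.leibniz_pow, pderiv_X_self,
      pderiv_X_of_ne one_ne_zero, smul_eq_mul, nsmul_eq_mul, map_natCast, Nat.add_succ_sub_one]
    ring
  have h₁ : pderiv 1 f = X 0 ^ (n + 2) + C c * X 0 * X 1 ^ (n + 1) := by
    simp only [hf, c, map_add, Derivation.leibniz, Derivation.leibniz_pow, pderiv_X_self,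
      pderiv_X_of_ne zero_ne_one, smul_eq_mul, nsmul_eq_mul, map_natCast, Nat.add_succ_sub_one]
    ring
  rw [h₀, h₁]
  exact MilnorXpYXYp.finrank_quotient_span_eq hc hc2 n
end

section
/- For every integer p ≥ 3 and f = x^p·y + x·y^p ∈ ℂ[x,y], the residue classes of the p−2 monomials x^i·y^{p+1−i} for i = 2, …, p−1 in the quotient ring ℂ[x,y]/⟨∂f/∂x, ∂f/∂y⟩ are linearly independent over ℂ. -/
open MvPolynomial


namespace MilnorAux
open Finsupp

lemma le2 (m n : Fin 2 →₀ ℕ) : m ≤ n ↔ m 0 ≤ n 0 ∧ m 1 ≤ n 1 := by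
  rw [Finsupp.le_def]
  constructor
  · intro h; exact ⟨h 0, h 1⟩
  · rintro ⟨h0, h1⟩ i; fin_cases i <;> assumption

lemma eq2 (m n : Fin 2 →₀ ℕ) : m = n ↔ m 0 = n 0 ∧ m 1 = n 1 := by
  constructor
  · rintro rfl; exact ⟨rfl, rfl⟩
  · rintro ⟨h0, h1⟩; ext i; fin_cases i <;> assumption

noncomputable def D (p b : ℕ) : Fin 2 →₀ ℕ :=
  Finsupp.single 0 b + Finsupp.single 1 (p + 1 - b)

lemma D_apply0 (p b : ℕ) : D p b 0 = b := by simp [D]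
lemma D_apply1 (p b : ℕ) : D p b 1 = p + 1 - b := by
  simp [D, Finsupp.single_apply]

noncomputable def M (s t : ℕ) : MvPolynomial (Fin 2) ℂ := X 0 ^ s * X 1 ^ t

lemma M_eq (s t : ℕ) :
    M s t = monomial (Finsupp.single 0 s + Finsupp.single 1 t) (1 : ℂ) := by
  rw [M, X_pow_eq_monomial, X_pow_eq_monomial, monomial_mul, one_mul]

lemma coeff_mul_M (m : Fin 2 →₀ ℕ) (s t : ℕ) (a : MvPolynomial (Fin 2) ℂ) :
    coeff m (a * M s t) =
      if s ≤ m 0 ∧ t ≤ m 1 then coeff (m - (Finsupp.single 0 s + Finsupp.single 1 t)) a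
      else 0 := by
  rw [M_eq, coeff_mul_monomial']
  have : (Finsupp.single 0 s + Finsupp.single 1 t : Fin 2 →₀ ℕ) ≤ m ↔ s ≤ m 0 ∧ t ≤ m 1 := by
    rw [le2]
    simp [Finsupp.single_apply]
  simp only [mul_one]
  exact if_congr this rfl rfl

noncomputable def Φ (p j : ℕ) : MvPolynomial (Fin 2) ℂ →ₗ[ℂ] ℂ :=
  lcoeff ℂ (D p j)
    - (if j = 2 then (p : ℂ) else 0) • lcoeff ℂ (Finsupp.single 0 (p + 1))
    - (if j = p - 1 then (p : ℂ) else 0) • lcoeff ℂ (Finsupp.single 1 (p + 1))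

lemma Φ_apply (p j : ℕ) (q : MvPolynomial (Fin 2) ℂ) :
    Φ p j q = coeff (D p j) q
      - (if j = 2 then (p : ℂ) else 0) * coeff (Finsupp.single 0 (p + 1)) q
      - (if j = p - 1 then (p : ℂ) else 0) * coeff (Finsupp.single 1 (p + 1)) q := by
  simp only [Φ, LinearMap.sub_apply, LinearMap.smul_apply, lcoeff_apply, smul_eq_mul]

lemma coeff_mul_gen (p : ℕ) (s1 t1 s2 t2 : ℕ) (a : MvPolynomial (Fin 2) ℂ)
    (m : Fin 2 →₀ ℕ) :
    coeff m (a * (C (p : ℂ) * M s1 t1 + M s2 t2)) =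
      (p : ℂ) * (if s1 ≤ m 0 ∧ t1 ≤ m 1 then
          coeff (m - (Finsupp.single 0 s1 + Finsupp.single 1 t1)) a else 0)
      + (if s2 ≤ m 0 ∧ t2 ≤ m 1 then
          coeff (m - (Finsupp.single 0 s2 + Finsupp.single 1 t2)) a else 0) := by
  rw [mul_add, mul_left_comm, coeff_add, coeff_C_mul, coeff_mul_M, coeff_mul_M]

lemma single0_apply0 (c : ℕ) : (Finsupp.single (0 : Fin 2) c) 0 = c := by simp
lemma single0_apply1 (c : ℕ) : (Finsupp.single (0 : Fin 2) c) 1 = 0 := by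
  simp [Finsupp.single_apply]
lemma single1_apply0 (c : ℕ) : (Finsupp.single (1 : Fin 2) c) 0 = 0 := by
  simp [Finsupp.single_apply]
lemma single1_apply1 (c : ℕ) : (Finsupp.single (1 : Fin 2) c) 1 = c := by simp

lemma Φ_mul_G1 (p b : ℕ) (hp : 3 ≤ p) (hb2 : 2 ≤ b) (hb : b ≤ p - 1)
    (a : MvPolynomial (Fin 2) ℂ) :
    Φ p b (a * (C (p : ℂ) * M (p - 1) 1 + M 0 p)) = 0 := by
  rw [Φ_apply, coeff_mul_gen, coeff_mul_gen, coeff_mul_gen]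
  simp only [D_apply0, D_apply1, single0_apply0, single0_apply1, single1_apply0, single1_apply1]
  rw [if_neg (by omega : ¬(p - 1 ≤ p + 1 ∧ 1 ≤ 0)), if_neg (by omega : ¬(0 ≤ p + 1 ∧ p ≤ 0)),
    if_neg (by omega : ¬(p - 1 ≤ 0 ∧ 1 ≤ p + 1)), if_pos (by omega : 0 ≤ (0:ℕ) ∧ p ≤ p + 1),
    if_neg (by omega : ¬(0 ≤ b ∧ p ≤ p + 1 - b))]
  have hsub : (Finsupp.single (1 : Fin 2) (p + 1)) - (Finsupp.single 0 0 + Finsupp.single 1 p)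
      = Finsupp.single 1 1 := by
    rw [eq2]
    constructor <;>
      simp [Finsupp.tsub_apply, single0_apply0, single0_apply1, single1_apply0, single1_apply1]
  rw [hsub]
  by_cases hbp : b = p - 1
  · subst hbp
    rw [if_pos (by omega : p - 1 ≤ p - 1 ∧ 1 ≤ p + 1 - (p - 1)), if_pos rfl]
    have hsub2 : (D p (p - 1)) - (Finsupp.single 0 (p - 1) + Finsupp.single 1 1)
        = Finsupp.single 1 1 := by
      rw [eq2]
      constructor <;>
        simp [Finsupp.tsub_apply, D_apply0, D_apply1, single0_apply0, single0_apply1,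
          single1_apply0, single1_apply1] <;> omega
    rw [hsub2]
    ring
  · rw [if_neg (by omega : ¬(p - 1 ≤ b ∧ 1 ≤ p + 1 - b)), if_neg hbp]
    ring

lemma Φ_mul_G2 (p b : ℕ) (hp : 3 ≤ p) (hb2 : 2 ≤ b) (hb : b ≤ p - 1)
    (a : MvPolynomial (Fin 2) ℂ) :
    Φ p b (a * (C (p : ℂ) * M 1 (p - 1) + M p 0)) = 0 := by
  rw [Φ_apply, coeff_mul_gen, coeff_mul_gen, coeff_mul_gen]
  simp only [D_apply0, D_apply1, single0_apply0, single0_apply1, single1_apply0, single1_apply1]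
  rw [if_neg (by omega : ¬(1 ≤ 0 ∧ p - 1 ≤ p + 1)), if_neg (by omega : ¬(p ≤ 0 ∧ 0 ≤ p + 1)),
    if_neg (by omega : ¬(1 ≤ p + 1 ∧ p - 1 ≤ 0)), if_pos (by omega : p ≤ p + 1 ∧ 0 ≤ (0:ℕ)),
    if_neg (by omega : ¬(p ≤ b ∧ 0 ≤ p + 1 - b))]
  have hsub : (Finsupp.single (0 : Fin 2) (p + 1)) - (Finsupp.single 0 p + Finsupp.single 1 0)
      = Finsupp.single 0 1 := by
    rw [eq2]
    constructor <;>
      simp [Finsupp.tsub_apply, single0_apply0, single0_apply1, single1_apply0, single1_apply1]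
  rw [hsub]
  by_cases hb2' : b = 2
  · subst hb2'
    rw [if_pos (by omega : 1 ≤ 2 ∧ p - 1 ≤ p + 1 - 2), if_pos rfl]
    have hsub2 : (D p 2) - (Finsupp.single 0 1 + Finsupp.single 1 (p - 1))
        = Finsupp.single 0 1 := by
      rw [eq2]
      constructor <;>
        simp [Finsupp.tsub_apply, D_apply0, D_apply1, single0_apply0, single0_apply1,
          single1_apply0, single1_apply1] <;> omega
    rw [hsub2]
    ring
  · rw [if_neg (by omega : ¬(1 ≤ b ∧ p - 1 ≤ p + 1 - b)), if_neg hb2']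
    ring

lemma Φ_M (p b c : ℕ) (hp : 3 ≤ p) (hb2 : 2 ≤ b) (hb : b ≤ p - 1)
    (hc2 : 2 ≤ c) (hc : c ≤ p - 1) :
    Φ p b (M c (p + 1 - c)) = if c = b then 1 else 0 := by
  rw [Φ_apply, M_eq]
  have hDc : (Finsupp.single (0 : Fin 2) c + Finsupp.single 1 (p + 1 - c)) = D p c := rfl
  rw [hDc, coeff_monomial, coeff_monomial, coeff_monomial]
  have h1 : D p c ≠ Finsupp.single 0 (p + 1) := by
    intro h
    have := congrArg (fun m : Fin 2 →₀ ℕ => m 1) h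
    simp only [D_apply1, single0_apply1] at this
    omega
  have h2 : D p c ≠ Finsupp.single 1 (p + 1) := by
    intro h
    have := congrArg (fun m : Fin 2 →₀ ℕ => m 0) h
    simp only [D_apply0, single1_apply0] at this
    omega
  have h3 : D p c = D p b ↔ c = b := by
    rw [eq2, D_apply0, D_apply0, D_apply1, D_apply1]; omega
  rw [if_neg h1, if_neg h2, if_congr h3 rfl rfl]
  ring

end MilnorAux


open MilnorAux

/-- Case (1.f) of the proof of Lemma 4.4: for `f = x^p y + x y^p`, `p ≥ 3`, the
classes of the `p-2` monomials `x² y^{p-1}, …, x^{p-1} y²` of degree `p+1` are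
linearly independent in the Milnor algebra. -/
theorem regular_basis_degree_p_plus_one (p : ℕ) (hp : 3 ≤ p)
    (f : MvPolynomial (Fin 2) ℂ) (hf : f = X 0 ^ p * X 1 + X 0 * X 1 ^ p) :
    LinearIndependent ℂ (fun i : Fin (p - 2) =>
      Ideal.Quotient.mk (Ideal.span {pderiv 0 f, pderiv 1 f})
        (X 0 ^ ((i : ℕ) + 2) * X 1 ^ (p + 1 - ((i : ℕ) + 2)))) := by
  have h1 : (1 : Fin 2) ≠ 0 := by decide
  have h0 : (0 : Fin 2) ≠ 1 := by decide
  have hd0 : pderiv 0 f = C (p : ℂ) * M (p - 1) 1 + M 0 p := by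
    rw [hf, M, M]
    rw [map_add, Derivation.leibniz, Derivation.leibniz, Derivation.leibniz_pow,
      Derivation.leibniz_pow, pderiv_X_self, pderiv_X_of_ne h1]
    simp [smul_smul, C_eq_smul_one]
    ring
  have hd1 : pderiv 1 f = C (p : ℂ) * M 1 (p - 1) + M p 0 := by
    rw [hf, M, M]
    rw [map_add, Derivation.leibniz, Derivation.leibniz, Derivation.leibniz_pow,
      Derivation.leibniz_pow, pderiv_X_self, pderiv_X_of_ne h0]
    simp [smul_smul, C_eq_smul_one]
    ring
  set I : Ideal (MvPolynomial (Fin 2) ℂ) := Ideal.span {pderiv 0 f, pderiv 1 f} with hI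
  rw [linearIndependent_iff']
  intro s g hsum j hj
  -- the sum of polynomials lies in the ideal
  have hmem : (∑ i ∈ s, g i • (X 0 ^ ((i : ℕ) + 2) * X 1 ^ (p + 1 - ((i : ℕ) + 2))
      : MvPolynomial (Fin 2) ℂ)) ∈ I := by
    rw [← Ideal.Quotient.eq_zero_iff_mem, ← Ideal.Quotient.mkₐ_eq_mk ℂ, map_sum]
    simpa only [map_smul, Ideal.Quotient.mkₐ_eq_mk] using hsum
  rw [hI, Ideal.mem_span_pair] at hmem
  obtain ⟨a, b, hab⟩ := hmem
  have hjb : 2 ≤ (j : ℕ) + 2 := by omega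
  have hjb' : (j : ℕ) + 2 ≤ p - 1 := by have := j.isLt; omega
  have key := congrArg (Φ p ((j : ℕ) + 2)) hab
  rw [map_add, hd0, hd1, Φ_mul_G1 p _ hp hjb hjb' a, Φ_mul_G2 p _ hp hjb hjb' b,
    map_sum] at key
  have hdelta : ∀ i ∈ s, Φ p ((j : ℕ) + 2)
      (g i • (X 0 ^ ((i : ℕ) + 2) * X 1 ^ (p + 1 - ((i : ℕ) + 2)) : MvPolynomial (Fin 2) ℂ))
      = if i = j then g i else 0 := by
    intro i _
    have hib : 2 ≤ (i : ℕ) + 2 := by omega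
    have hib' : (i : ℕ) + 2 ≤ p - 1 := by have := i.isLt; omega
    rw [map_smul, show (X 0 ^ ((i : ℕ) + 2) * X 1 ^ (p + 1 - ((i : ℕ) + 2))
        : MvPolynomial (Fin 2) ℂ) = M ((i : ℕ) + 2) (p + 1 - ((i : ℕ) + 2)) from rfl,
      Φ_M p _ _ hp hjb hjb' hib hib']
    have : ((i : ℕ) + 2 = (j : ℕ) + 2) ↔ i = j := by
      rw [Fin.ext_iff]; omega
    rw [if_congr this rfl rfl]
    simp [smul_eq_mul, mul_ite]
  rw [Finset.sum_congr rfl hdelta, Finset.sum_ite_eq' s j, if_pos hj] at key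
  simpa using key.symm
end

section
/- For every integer p ≥ 2, let g = x^p·y + x·y^p + x^{p²+2} + y^{p²+2} ∈ ℂ[x,y] and regard ∂g/∂x and ∂g/∂y as elements of the formal power series ring ℂ[[x,y]]. Then the (p²+2)-th power of the maximal ideal is contained in the Jacobian ideal: (⟨x, y⟩)^{p²+2} ⊆ ⟨∂g/∂x, ∂g/∂y⟩ as ideals of ℂ[[x,y]]. -/
open MvPolynomial

private lemma mem_span_pair_pow {R : Type*} [CommRing R] {a b : R} {n i j : ℕ} (h : n ≤ i + j) :
    a ^ i * b ^ j ∈ Ideal.span {a, b} ^ n := by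
  refine Ideal.pow_le_pow_right h ?_
  rw [pow_add]
  exact Ideal.mul_mem_mul
    (Ideal.pow_mem_pow (Ideal.subset_span (by simp)) i)
    (Ideal.pow_mem_pow (Ideal.subset_span (by simp)) j)

private lemma span_pair_pow_le {R : Type*} [CommRing R] {a b : R} :
    ∀ (n : ℕ) (K : Ideal R), (∀ i j : ℕ, i + j = n → a ^ i * b ^ j ∈ K) →
      Ideal.span {a, b} ^ n ≤ K := by
  intro n
  induction n with
  | zero =>
    intro K h
    have h1 : (1 : R) ∈ K := by simpa using h 0 0 rfl
    rw [pow_zero, Ideal.one_eq_top, top_le_iff]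
    exact (Ideal.eq_top_iff_one K).2 h1
  | succ n ih =>
    intro K h
    rw [pow_succ, Ideal.mul_le]
    intro r hr s hs
    have hr' : r ∈ (K.colon (Ideal.span {a})) ⊓ (K.colon (Ideal.span {b})) := by
      refine ih _ ?_ hr
      intro i j hij
      refine Submodule.mem_inf.mpr ⟨?_, ?_⟩
      · rw [Ideal.mem_colon_span_singleton, show a ^ i * b ^ j * a = a ^ (i+1) * b ^ j by ring]
        exact h _ _ (by omega)
      · rw [Ideal.mem_colon_span_singleton, show a ^ i * b ^ j * b = a ^ i * b ^ (j+1) by ring]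
        exact h _ _ (by omega)
    have hle : Ideal.span {a, b} ≤ K.colon (Ideal.span {r}) := by
      rw [Ideal.span_le]
      intro t ht
      simp only [Set.mem_insert_iff, Set.mem_singleton_iff] at ht
      rcases ht with rfl | rfl
      · rw [SetLike.mem_coe, Ideal.mem_colon_span_singleton]
        have := (Submodule.mem_inf.mp hr').1
        rw [Ideal.mem_colon_span_singleton] at this
        rwa [mul_comm]
      · rw [SetLike.mem_coe, Ideal.mem_colon_span_singleton]
        have := (Submodule.mem_inf.mp hr').2
        rw [Ideal.mem_colon_span_singleton] at this
        rwa [mul_comm]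
    have hs' := hle hs
    rw [Ideal.mem_colon_span_singleton] at hs'
    rwa [mul_comm] at hs'

private lemma mem_of_C_mul_mem {K : Ideal (MvPolynomial (Fin 2) ℂ)} {a : ℂ} (ha : a ≠ 0)
    {m : MvPolynomial (Fin 2) ℂ} (h : C a * m ∈ K) : m ∈ K := by
  have : m = C a⁻¹ * (C a * m) := by
    rw [← mul_assoc, ← C_mul, inv_mul_cancel₀ ha, C_1, one_mul]
  rw [this]
  exact K.mul_mem_left _ h

private lemma hC_lemma (q : ℕ) : (C ((1:ℂ) - ((q:ℂ)+2)^2) : MvPolynomial (Fin 2) ℂ)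
    = 1 - ((q : MvPolynomial (Fin 2) ℂ) + 2)^2 := by
  simp [map_sub, map_one, map_pow, map_add, map_natCast, map_ofNat]

private lemma hne_lemma (q : ℕ) : (1:ℂ) - ((q:ℂ)+2)^2 ≠ 0 := by
  intro h
  have h2 : (((q+2)^2 : ℕ) : ℂ) = ((1 : ℕ) : ℂ) := by push_cast; linear_combination -h
  have h3 : (q+2)^2 = 1 := Nat.cast_injective h2
  have h4 : 2^2 ≤ (q+2)^2 := Nat.pow_le_pow_left (by omega) 2
  omega

/-- The key polynomial computation: every monomial of degree `d+1` lies in the ideal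
generated by the two (perturbed) generators together with the `(d+2)`-nd power of
the maximal ideal. -/
private lemma key_poly (q d : ℕ) (hd : 2*q + 3 ≤ d) (w : MvPolynomial (Fin 2) ℂ)
    (i j : ℕ) (hij : i + j = d + 1) :
    (X 0 ^ i * X 1 ^ j : MvPolynomial (Fin 2) ℂ) ∈
      Ideal.span {X 1 ^ (q+2) + ((q : MvPolynomial (Fin 2) ℂ) + 2) * X 0 ^ (q+1) * X 1
                    + w * X 0 ^ d,
                  X 0 ^ (q+2) + ((q : MvPolynomial (Fin 2) ℂ) + 2) * X 0 * X 1 ^ (q+1)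
                    + w * X 1 ^ d}
        ⊔ (Ideal.span {(X 0 : MvPolynomial (Fin 2) ℂ), X 1}) ^ (d + 2) := by
  set F : MvPolynomial (Fin 2) ℂ :=
    X 1 ^ (q+2) + ((q : MvPolynomial (Fin 2) ℂ) + 2) * X 0 ^ (q+1) * X 1 with hF
  set H : MvPolynomial (Fin 2) ℂ :=
    X 0 ^ (q+2) + ((q : MvPolynomial (Fin 2) ℂ) + 2) * X 0 * X 1 ^ (q+1) with hH
  set K : Ideal (MvPolynomial (Fin 2) ℂ) :=
    Ideal.span {F + w * X 0 ^ d, H + w * X 1 ^ d}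
      ⊔ (Ideal.span {(X 0 : MvPolynomial (Fin 2) ℂ), X 1}) ^ (d + 2) with hK
  -- Step (a): multiples of the homogeneous low-order parts are in K.
  have hf : ∀ u v : ℕ, u + v + q + 2 = d + 1 → X 0 ^ u * X 1 ^ v * F ∈ K := by
    intro u v huv
    have e : X 0 ^ u * X 1 ^ v * F
        = X 0 ^ u * X 1 ^ v * (F + w * X 0 ^ d) - w * (X 0 ^ (u+d) * X 1 ^ v) := by
      rw [hF]; ring
    rw [e]
    refine Ideal.sub_mem _
      (Ideal.mem_sup_left (Ideal.mul_mem_left _ _ (Ideal.subset_span (by simp)))) ?_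
    exact Ideal.mem_sup_right (Ideal.mul_mem_left _ _ (mem_span_pair_pow (by omega)))
  have hh : ∀ u v : ℕ, u + v + q + 2 = d + 1 → X 0 ^ u * X 1 ^ v * H ∈ K := by
    intro u v huv
    have e : X 0 ^ u * X 1 ^ v * H
        = X 0 ^ u * X 1 ^ v * (H + w * X 1 ^ d) - w * (X 0 ^ u * X 1 ^ (v+d)) := by
      rw [hH]; ring
    rw [e]
    refine Ideal.sub_mem _
      (Ideal.mem_sup_left (Ideal.mul_mem_left _ _ (Ideal.subset_span (by simp)))) ?_
    exact Ideal.mem_sup_right (Ideal.mul_mem_left _ _ (mem_span_pair_pow (by omega)))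
  -- Case 1 : 1 ≤ i, q+2 ≤ j
  have case1 : ∀ i j : ℕ, i + j = d + 1 → 1 ≤ i → q + 2 ≤ j →
      (X 0 ^ i * X 1 ^ j : MvPolynomial (Fin 2) ℂ) ∈ K := by
    intro i j hij hi hj
    obtain ⟨i', rfl⟩ : ∃ i', i = i' + 1 := ⟨i - 1, by omega⟩
    obtain ⟨j', rfl⟩ : ∃ j', j = j' + (q+2) := ⟨j - (q+2), by omega⟩
    have h1 := hf (i'+1) j' (by omega)
    have h2 := hh i' (j'+1) (by omega)
    apply mem_of_C_mul_mem (hne_lemma q)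
    have e : C ((1:ℂ) - ((q:ℂ)+2)^2) * (X 0 ^ (i'+1) * X 1 ^ (j'+(q+2)))
        = X 0 ^ (i'+1) * X 1 ^ j' * F
          - ((q : MvPolynomial (Fin 2) ℂ) + 2) * (X 0 ^ i' * X 1 ^ (j'+1) * H) := by
      rw [hC_lemma, hF, hH]; ring
    rw [e]
    exact Ideal.sub_mem _ h1 (Ideal.mul_mem_left _ _ h2)
  -- Case 2 : q+2 ≤ i, 1 ≤ j
  have case2 : ∀ i j : ℕ, i + j = d + 1 → q + 2 ≤ i → 1 ≤ j →
      (X 0 ^ i * X 1 ^ j : MvPolynomial (Fin 2) ℂ) ∈ K := by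
    intro i j hij hi hj
    obtain ⟨i', rfl⟩ : ∃ i', i = i' + (q+2) := ⟨i - (q+2), by omega⟩
    obtain ⟨j', rfl⟩ : ∃ j', j = j' + 1 := ⟨j - 1, by omega⟩
    have h1 := hh i' (j'+1) (by omega)
    have h2 := hf (i'+1) j' (by omega)
    apply mem_of_C_mul_mem (hne_lemma q)
    have e : C ((1:ℂ) - ((q:ℂ)+2)^2) * (X 0 ^ (i'+(q+2)) * X 1 ^ (j'+1))
        = X 0 ^ i' * X 1 ^ (j'+1) * H
          - ((q : MvPolynomial (Fin 2) ℂ) + 2) * (X 0 ^ (i'+1) * X 1 ^ j' * F) := by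
      rw [hC_lemma, hF, hH]; ring
    rw [e]
    exact Ideal.sub_mem _ h1 (Ideal.mul_mem_left _ _ h2)
  -- dispatch
  rcases Nat.eq_zero_or_pos j with hj0 | hj1
  · -- j = 0, i = d+1 : the pure power of x
    subst hj0
    obtain rfl : i = d + 1 := by omega
    obtain ⟨e, rfl⟩ : ∃ e, d = e + (q+2) := ⟨d - (q+2), by omega⟩
    have h1 := hh (e+1) 0 (by omega)
    have h2 := case2 (e+2) (q+1) (by omega) (by omega) (by omega)
    have e3 : (X 0 ^ (e+(q+2)+1) * X 1 ^ 0 : MvPolynomial (Fin 2) ℂ)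
        = X 0 ^ (e+1) * X 1 ^ 0 * H
          - ((q : MvPolynomial (Fin 2) ℂ) + 2) * (X 0 ^ (e+2) * X 1 ^ (q+1)) := by
      rw [hH]; ring
    rw [e3]
    exact Ideal.sub_mem _ h1 (Ideal.mul_mem_left _ _ h2)
  rcases Nat.eq_zero_or_pos i with hi0 | hi1
  · -- i = 0, j = d+1 : the pure power of y
    subst hi0
    obtain rfl : j = d + 1 := by omega
    obtain ⟨e, rfl⟩ : ∃ e, d = e + (q+2) := ⟨d - (q+2), by omega⟩
    have h1 := hf 0 (e+1) (by omega)
    have h2 := case1 (q+1) (e+2) (by omega) (by omega) (by omega)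
    have e3 : (X 0 ^ 0 * X 1 ^ (e+(q+2)+1) : MvPolynomial (Fin 2) ℂ)
        = X 0 ^ 0 * X 1 ^ (e+1) * F
          - ((q : MvPolynomial (Fin 2) ℂ) + 2) * (X 0 ^ (q+1) * X 1 ^ (e+2)) := by
      rw [hF]; ring
    rw [e3]
    exact Ideal.sub_mem _ h1 (Ideal.mul_mem_left _ _ h2)
  by_cases hj : q + 2 ≤ j
  · exact case1 i j hij hi1 hj
  · exact case2 i j hij (by omega) hj1

/-- Case (1.f) of the proof of Lemma 4.4: for
`g = x^p y + x y^p + x^{p²+2} + y^{p²+2}`, the `(p²+2)`-th power of the maximal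
ideal `⟨x,y⟩` of `ℂ[[x,y]]` is contained in the Jacobian ideal of `g`. -/
theorem maximal_ideal_power_in_jacobian (p : ℕ) (hp : 2 ≤ p)
    (g : MvPolynomial (Fin 2) ℂ)
    (hg : g = X 0 ^ p * X 1 + X 0 * X 1 ^ p + X 0 ^ (p ^ 2 + 2) + X 1 ^ (p ^ 2 + 2)) :
    (Ideal.span {(MvPowerSeries.X 0 : MvPowerSeries (Fin 2) ℂ),
                 (MvPowerSeries.X 1 : MvPowerSeries (Fin 2) ℂ)}) ^ (p ^ 2 + 2) ≤
      Ideal.span {(↑(pderiv 0 g) : MvPowerSeries (Fin 2) ℂ),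
                  (↑(pderiv 1 g) : MvPowerSeries (Fin 2) ℂ)} := by
  obtain ⟨q, rfl⟩ : ∃ q, p = q + 2 := ⟨p - 2, by omega⟩
  obtain ⟨A, hA⟩ : ∃ A, (q+2)^2 = A + 1 := ⟨q*q + 4*q + 3, by ring⟩
  have hA' : A + 1 = q*q + 4*q + 4 := by rw [← hA]; ring
  have hd : 2*q + 3 ≤ A + 2 := by nlinarith [Nat.zero_le (q*q)]
  subst hg
  rw [hA]
  -- compute the partial derivatives
  have hgx : pderiv 0 (X 0 ^ (q+2) * X 1 + X 0 * X 1 ^ (q+2) + X 0 ^ (A+1+2) + X 1 ^ (A+1+2)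
        : MvPolynomial (Fin 2) ℂ)
      = X 1 ^ (q+2) + ((q : MvPolynomial (Fin 2) ℂ) + 2) * X 0 ^ (q+1) * X 1
          + ((A : MvPolynomial (Fin 2) ℂ) + 3) * X 0 ^ (A+2) := by
    simp only [map_add, pderiv_mul, pderiv_pow, pderiv_X_self,
      pderiv_X_of_ne (show (1 : Fin 2) ≠ 0 by decide),
      pderiv_X_of_ne (show (0 : Fin 2) ≠ 1 by decide)]
    rw [show q + 2 - 1 = q + 1 by omega, show A + 1 + 2 - 1 = A + 2 by omega]
    push_cast
    ring
  have hgy : pderiv 1 (X 0 ^ (q+2) * X 1 + X 0 * X 1 ^ (q+2) + X 0 ^ (A+1+2) + X 1 ^ (A+1+2)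
        : MvPolynomial (Fin 2) ℂ)
      = X 0 ^ (q+2) + ((q : MvPolynomial (Fin 2) ℂ) + 2) * X 0 * X 1 ^ (q+1)
          + ((A : MvPolynomial (Fin 2) ℂ) + 3) * X 1 ^ (A+2) := by
    simp only [map_add, pderiv_mul, pderiv_pow, pderiv_X_self,
      pderiv_X_of_ne (show (1 : Fin 2) ≠ 0 by decide),
      pderiv_X_of_ne (show (0 : Fin 2) ≠ 1 by decide)]
    rw [show q + 2 - 1 = q + 1 by omega, show A + 1 + 2 - 1 = A + 2 by omega]
    push_cast
    ring
  rw [hgx, hgy]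
  set w : MvPolynomial (Fin 2) ℂ := (A : MvPolynomial (Fin 2) ℂ) + 3 with hw
  set Gx : MvPolynomial (Fin 2) ℂ :=
    X 1 ^ (q+2) + ((q : MvPolynomial (Fin 2) ℂ) + 2) * X 0 ^ (q+1) * X 1 + w * X 0 ^ (A+2)
    with hGx
  set Gy : MvPolynomial (Fin 2) ℂ :=
    X 0 ^ (q+2) + ((q : MvPolynomial (Fin 2) ℂ) + 2) * X 0 * X 1 ^ (q+1) + w * X 1 ^ (A+2)
    with hGy
  set J : Ideal (MvPowerSeries (Fin 2) ℂ) :=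
    Ideal.span {(↑Gx : MvPowerSeries (Fin 2) ℂ), (↑Gy : MvPowerSeries (Fin 2) ℂ)} with hJ
  set M : Ideal (MvPowerSeries (Fin 2) ℂ) :=
    Ideal.span {(MvPowerSeries.X 0 : MvPowerSeries (Fin 2) ℂ), MvPowerSeries.X 1} with hM
  -- push the polynomial computation to the power series ring
  have himg : ∀ i j : ℕ, i + j = A + 3 →
      (MvPowerSeries.X 0 : MvPowerSeries (Fin 2) ℂ) ^ i * MvPowerSeries.X 1 ^ j
        ∈ J ⊔ M ^ (A + 4) := by
    intro i j hij
    have hmem := key_poly q (A+2) hd w i j (by omega)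
    have h2 := Ideal.mem_map_of_mem (MvPolynomial.coeToMvPowerSeries.ringHom
      (σ := Fin 2) (R := ℂ)) hmem
    rw [Ideal.map_sup, Ideal.map_span, Ideal.map_pow, Ideal.map_span] at h2
    simpa only [Set.image_insert_eq, Set.image_singleton,
      coeToMvPowerSeries.ringHom_apply, map_mul, map_pow, coe_X, ← hGx, ← hGy,
      ← hJ, ← hM] using h2
  have main : M ^ (A + 3) ≤ J ⊔ M ^ (A + 4) := by
    rw [hM]
    exact span_pair_pow_le _ _ himg
  -- Nakayama
  have hMjac : M ≤ Ideal.jacobson ⊥ := by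
    rw [IsLocalRing.jacobson_eq_maximalIdeal ⊥ bot_ne_top, hM, Ideal.span_le]
    intro t ht
    simp only [Set.mem_insert_iff, Set.mem_singleton_iff] at ht
    have hx : ∀ s : Fin 2, (MvPowerSeries.X s : MvPowerSeries (Fin 2) ℂ)
        ∈ IsLocalRing.maximalIdeal (MvPowerSeries (Fin 2) ℂ) := by
      intro s
      rw [IsLocalRing.mem_maximalIdeal]
      intro hu
      have := (MvPowerSeries.isUnit_iff_constantCoeff).mp hu
      rw [MvPowerSeries.constantCoeff_X] at this
      exact not_isUnit_zero this
    rcases ht with rfl | rfl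
    · exact hx 0
    · exact hx 1
  have hfg : (M ^ (A + 3)).FG := by
    refine Submodule.FG.pow ?_ _
    exact Submodule.fg_span (Set.toFinite _)
  have hNN : M ^ (A + 3) ≤ J ⊔ M • M ^ (A + 3) := by
    have hMs : M • M ^ (A + 3) = M ^ (A + 4) := by
      rw [Ideal.smul_eq_mul]
      ring
    rw [hMs]
    exact main
  have hfin := Submodule.le_of_le_smul_of_le_jacobson_bot hfg hMjac hNN
  exact le_trans (le_of_eq (by ring)) hfin
end

section
/- Let p ≥ 2, s and τ be integers with 0 < s < p and τ ≥ 1, and let c ∈ ℂ, c ≠ 0, be such that for every t ∈ ℂ with binom(p,s)·t^{p−s} = −c one has (1 − binom(p,s))·t^{p−1} + 1 ≠ 0. Then there exist no complex numbers c₁, c₂, c₃ with c₁ ≠ 0 and c₃ ≠ 0 satisfying simultaneously binom(p, p−s)·c₁^s·c₂^{p−s} + c·c₁^s·c₃^{τ(p−s)} = 0 and c₂^p + c·c₂^s·c₃^{τ(p−s)} + c₂·c₃^{(p−1)τ} = 0. -/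
/-- Case (1.c) of the proof of Lemma 4.4: for `c` in the stated Zariski-open set,
no coordinate change `x ↦ c₁x + c₂y^τ`, `y ↦ c₃y` with `c₁, c₃ ≠ 0` removes both
the interior monomial `x^s y^{τ(p-s)}` and the monomial `y^{pτ}` from the facet jet
`x^p + c x^s y^{τ(p-s)} + x y^{(p-1)τ}`. -/
theorem no_normalizing_coordinate_change (p s τ : ℕ) (hp : 2 ≤ p)
    (hs : 0 < s) (hsp : s < p) (hτ : 1 ≤ τ) (c : ℂ) (hc : c ≠ 0)
    (hZ : ∀ t : ℂ, (p.choose s : ℂ) * t ^ (p - s) = -c →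
      (1 - (p.choose s : ℂ)) * t ^ (p - 1) + 1 ≠ 0) :
    ¬ ∃ c₁ c₂ c₃ : ℂ, c₁ ≠ 0 ∧ c₃ ≠ 0 ∧
      (p.choose (p - s) : ℂ) * c₁ ^ s * c₂ ^ (p - s) +
        c * c₁ ^ s * c₃ ^ (τ * (p - s)) = 0 ∧
      c₂ ^ p + c * c₂ ^ s * c₃ ^ (τ * (p - s)) + c₂ * c₃ ^ ((p - 1) * τ) = 0 := by
  rintro ⟨c₁, c₂, c₃, h1, h3, e1, e2⟩
  rw [Nat.choose_symm hsp.le] at e1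
  have h1s : c₁ ^ s ≠ 0 := pow_ne_zero _ h1
  have h3m : c₃ ^ (τ * (p - s)) ≠ 0 := pow_ne_zero _ h3
  -- key : binom * c₂^(p-s) + c * c₃^(τ(p-s)) = 0
  have key : (p.choose s : ℂ) * c₂ ^ (p - s) + c * c₃ ^ (τ * (p - s)) = 0 := by
    have h : c₁ ^ s * ((p.choose s : ℂ) * c₂ ^ (p - s) + c * c₃ ^ (τ * (p - s))) = 0 := by
      linear_combination e1
    exact (mul_eq_zero.mp h).resolve_left h1s
  have h2 : c₂ ≠ 0 := by
    intro h
    rw [h, zero_pow (by omega : p - s ≠ 0), mul_zero, zero_add] at key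
    exact hc ((mul_eq_zero.mp key).resolve_right h3m)
  set t : ℂ := c₂ / c₃ ^ τ with ht
  have h3t : (c₃ : ℂ) ^ τ ≠ 0 := pow_ne_zero _ h3
  have hpm : (c₃ ^ τ) ^ (p - s) = c₃ ^ (τ * (p - s)) := by rw [← pow_mul]
  have ht1 : (p.choose s : ℂ) * t ^ (p - s) = -c := by
    rw [ht, div_pow, ← mul_div_assoc, div_eq_iff (pow_ne_zero _ h3t), hpm]
    linear_combination key
  refine hZ t ht1 ?_
  have hpow1 : c₂ ^ p = c₂ ^ s * c₂ ^ (p - s) := by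
    rw [← pow_add]; congr 1; omega
  have hpow2 : c₂ ^ p = c₂ * c₂ ^ (p - 1) := by
    rw [← pow_succ']; congr 1; omega
  have e3 : c₂ * ((1 - (p.choose s : ℂ)) * c₂ ^ (p - 1) + c₃ ^ ((p - 1) * τ)) = 0 := by
    linear_combination e2 - c₂ ^ s * key - (p.choose s : ℂ) * hpow1 +
      ((p.choose s : ℂ) - 1) * hpow2
  have e4 : (1 - (p.choose s : ℂ)) * c₂ ^ (p - 1) + c₃ ^ ((p - 1) * τ) = 0 :=
    (mul_eq_zero.mp e3).resolve_left h2
  have hpm2 : (c₃ ^ τ) ^ (p - 1) = c₃ ^ ((p - 1) * τ) := by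
    rw [← pow_mul, Nat.mul_comm]
  rw [ht, div_pow]
  field_simp
  rw [hpm2]
  linear_combination e4
end

section
/- Let ε ∈ ℂ be such that the quartic q = x⁴ + ε·x³y + y⁴ ∈ ℂ[x,y] is squarefree. Then there exist a ∈ ℂ and a ℂ-algebra automorphism φ of the polynomial ring ℂ[x,y] such that φ(q) = x⁴ + a·x²y² + y⁴. -/
/-!
Over an algebraically closed field the quartic is `∏ (x - rᵢ y)` with pairwise distinct `rᵢ`
(squarefreeness). There is an involution of `ℙ¹` swapping `r₀ ↔ r₁` and `r₂ ↔ r₃`; a linear change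
of coordinates moving its two fixed points to `0` and `∞` turns it into `z ↦ -z`. The roots then
come in pairs `±s`, `±t`, so the quartic becomes `α x⁴ + γ x²y² + β y⁴` with `α β ≠ 0`, and
rescaling `x` and `y` by fourth roots of `α⁻¹` and `β⁻¹` gives the normal form.
-/

namespace MvPolynomial

section LinearSubst

variable {R σ : Type*} [CommRing R] [Fintype σ]

noncomputable def linearSubst (M : Matrix σ σ R) : MvPolynomial σ R →ₐ[R] MvPolynomial σ R :=
  aeval fun i ↦ ∑ j, C (M i j) * X j

@[simp]
lemma linearSubst_X (M : Matrix σ σ R) (i : σ) : linearSubst M (X i) = ∑ j, C (M i j) * X j :=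
  aeval_X _ _

lemma linearSubst_comp (M N : Matrix σ σ R) :
    (linearSubst M).comp (linearSubst N) = linearSubst (N * M) := by
  refine algHom_ext fun i ↦ ?_
  simp only [AlgHom.comp_apply, linearSubst_X, map_sum, map_mul, algHom_C, algebraMap_eq,
    Matrix.mul_apply, Finset.sum_mul, Finset.mul_sum, mul_assoc]
  exact Finset.sum_comm

variable [DecidableEq σ]

lemma linearSubst_one : linearSubst (1 : Matrix σ σ R) = AlgHom.id R _ :=
  algHom_ext fun i ↦ by simp [Matrix.one_apply]

noncomputable def linearSubstEquiv (M : GL σ R) : MvPolynomial σ R ≃ₐ[R] MvPolynomial σ R :=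
  AlgEquiv.ofAlgHom (linearSubst M) (linearSubst ↑M⁻¹)
    (by rw [linearSubst_comp, ← Matrix.GeneralLinearGroup.coe_mul, inv_mul_cancel,
      Matrix.GeneralLinearGroup.coe_one, linearSubst_one])
    (by rw [linearSubst_comp, ← Matrix.GeneralLinearGroup.coe_mul, mul_inv_cancel,
      Matrix.GeneralLinearGroup.coe_one, linearSubst_one])

@[simp]
lemma linearSubstEquiv_apply (M : GL σ R) (p : MvPolynomial σ R) :
    linearSubstEquiv M p = linearSubst M p := rfl

end LinearSubst

section BinaryForms

variable {R : Type*} [CommRing R]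

lemma linearSubst_X_zero_sub_C_mul_X_one (a b c d r : R) :
    linearSubst !![a, b; c, d] (X 0 - C r * X 1 : MvPolynomial (Fin 2) R) =
      C (a - r * c) * X 0 + C (b - r * d) * X 1 := by
  simp only [map_sub, map_mul, linearSubst_X, Fin.sum_univ_two, algHom_C, algebraMap_eq,
    Matrix.of_apply, Matrix.cons_val', Matrix.cons_val_fin_one, Matrix.cons_val_zero,
    Matrix.cons_val_one]
  ring

lemma linear_form_mul_eq_of_cross_eq_zero {l m l' m' : R} (h : l * m' + l' * m = 0) :
    (C l * X 0 + C m * X 1) * (C l' * X 0 + C m' * X 1 : MvPolynomial (Fin 2) R) =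
      C (l * l') * X 0 ^ 2 + C (m * m') * X 1 ^ 2 := by
  have hC := congrArg (C (σ := Fin 2)) h
  simp only [map_add, map_mul, map_zero] at hC
  rw [C_mul, C_mul]
  linear_combination (X 0 * X 1) * hC

lemma exists_linearSubst_prod_eq_even_quartic {r : Fin 4 → R} {a b c d : R}
    (h₀₁ : (a - r 0 * c) * (b - r 1 * d) + (a - r 1 * c) * (b - r 0 * d) = 0)
    (h₂₃ : (a - r 2 * c) * (b - r 3 * d) + (a - r 3 * c) * (b - r 2 * d) = 0) :
    ∃ γ : R, linearSubst !![a, b; c, d] (∏ i, (X 0 - C (r i) * X 1)) =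
      C (∏ i, (a - r i * c)) * X 0 ^ 4 + C γ * X 0 ^ 2 * X 1 ^ 2 +
        C (∏ i, (b - r i * d)) * X 1 ^ 4 := by
  refine ⟨(a - r 0 * c) * (a - r 1 * c) * (b - r 2 * d) * (b - r 3 * d) +
    (b - r 0 * d) * (b - r 1 * d) * (a - r 2 * c) * (a - r 3 * c), ?_⟩
  rw [map_prod, Fin.prod_univ_four]
  simp only [linearSubst_X_zero_sub_C_mul_X_one]
  rw [mul_assoc, linear_form_mul_eq_of_cross_eq_zero h₀₁,
    linear_form_mul_eq_of_cross_eq_zero h₂₃]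
  simp only [Fin.prod_univ_four, map_add, map_mul]
  ring

lemma injective_of_squarefree_prod_X_sub_C_mul_X [Nontrivial R] {ι : Type*} [Fintype ι]
    {r : ι → R} (h : Squarefree (∏ i, (X 0 - C (r i) * X 1 : MvPolynomial (Fin 2) R))) :
    Function.Injective r := by
  classical
  intro i j hij
  by_contra hne
  have hdvd : (X 0 - C (r i) * X 1) * (X 0 - C (r i) * X 1) ∣
      (∏ i, (X 0 - C (r i) * X 1 : MvPolynomial (Fin 2) R)) := by
    rw [← Finset.mul_prod_erase _ _ (Finset.mem_univ i), hij]
    exact mul_dvd_mul_left _ (Finset.dvd_prod_of_mem _ (by simp [Ne.symm hne]))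
  simpa using (h _ hdvd).map (eval ![r i, 1])

end BinaryForms

end MvPolynomial

namespace Polynomial

lemma homogenize_X_sub_C {R : Type*} [CommRing R] (r : R) :
    homogenize (X - C r) 1 = MvPolynomial.X 0 - MvPolynomial.C r * MvPolynomial.X 1 := by
  simp [homogenize_sub, homogenize_X, homogenize_C]

lemma exists_homogenize_eq_prod_of_splits {K : Type*} [Field K] {p : K[X]} {n : ℕ}
    (hp : p.Monic) (hs : p.Splits) (hn : p.natDegree = n) :
    ∃ r : Fin n → K,
      homogenize p n = ∏ i, (MvPolynomial.X 0 - MvPolynomial.C (r i) * MvPolynomial.X 1) := by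
  obtain ⟨l, hl⟩ := Quotient.exists_rep p.roots
  obtain rfl : l.length = n := by
    rw [← hn, hs.natDegree_eq_card_roots, ← hl]; rfl
  refine ⟨l.get, ?_⟩
  conv_lhs => rw [hs.eq_prod_roots_of_monic hp, ← hl, ← List.ofFn_get l]
  rw [Multiset.quot_mk_to_coe, Multiset.map_coe, Multiset.prod_coe, List.map_ofFn, List.prod_ofFn]
  simpa [homogenize_X_sub_C] using homogenize_finsetProd (s := Finset.univ)
    (p := fun i ↦ X - C (l.get i)) (n := fun _ ↦ 1) fun i _ ↦ (natDegree_X_sub_C _).le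

end Polynomial

open MvPolynomial

variable {K : Type*} [Field K]

/-- The cross-ratio `(x, y; A, B)` is `-1`: the involution of `ℙ¹` fixing `A` and `B` swaps
`x` and `y`. -/
def IsHarmonic (x y A B : K) : Prop :=
  (x - A) * (y - B) + (y - A) * (x - B) = 0

lemma IsHarmonic.ne {x y A B : K} (h : IsHarmonic x y A B) (hxy : x ≠ y) (hAB : A ≠ B) :
    x ≠ A ∧ x ≠ B ∧ y ≠ A ∧ y ≠ B := by
  unfold IsHarmonic at h
  grind

lemma IsHarmonic.eq_or_eq_of_self [NeZero (2 : K)] {x y A : K} (h : IsHarmonic x y A A) :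
    x = A ∨ y = A := by
  unfold IsHarmonic at h
  have := two_ne_zero (α := K)
  grind

lemma IsHarmonic.nondegenerate [NeZero (2 : K)] {r : Fin 4 → K} (hr : Function.Injective r)
    {A B : K} (h₀₁ : IsHarmonic (r 0) (r 1) A B) (h₂₃ : IsHarmonic (r 2) (r 3) A B) :
    A ≠ B ∧ ∀ i, r i ≠ A ∧ r i ≠ B := by
  have hAB : A ≠ B := by
    rintro rfl
    rcases h₀₁.eq_or_eq_of_self with h₀ | h₀ <;> rcases h₂₃.eq_or_eq_of_self with h₂ | h₂ <;>
      exact absurd (hr (h₀.trans h₂.symm)) (by decide)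
  have n₀₁ := h₀₁.ne (hr.ne (by decide)) hAB
  have n₂₃ := h₂₃.ne (hr.ne (by decide)) hAB
  exact ⟨hAB, fun i ↦ by fin_cases i <;> tauto⟩

/-- Both conditions are linear in `A + B` and `A B`, which they determine when
`r₀ + r₁ ≠ r₂ + r₃`; `A` and `B` are then the roots of a quadratic. -/
lemma exists_isHarmonic_of_add_ne [IsAlgClosed K] [NeZero (2 : K)] {r : Fin 4 → K}
    (hsum : r 0 + r 1 ≠ r 2 + r 3) :
    ∃ A B : K, IsHarmonic (r 0) (r 1) A B ∧ IsHarmonic (r 2) (r 3) A B := by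
  obtain ⟨u, hu⟩ : ∃ u, u * (r 0 + r 1 - (r 2 + r 3)) = 2 * (r 0 * r 1 - r 2 * r 3) :=
    ⟨_, div_mul_cancel₀ _ (sub_ne_zero.2 hsum)⟩
  obtain ⟨A, hA⟩ : ∃ A, 2 * (A * A) + (-2 * u) * A + (u * (r 0 + r 1) - 2 * (r 0 * r 1)) = 0 :=
    exists_quadratic_eq_zero two_ne_zero (IsAlgClosed.exists_eq_mul_self _)
  exact ⟨A, u - A, by unfold IsHarmonic; linear_combination -hA,
    by unfold IsHarmonic; linear_combination -hA + hu⟩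

/-- The substitution `x ↦ a x + b y, y ↦ c x + d y` sends `x - rᵢ y` to
`(a - rᵢ c) x + (b - rᵢ d) y`; the last two conditions say that the products of these forms over
the pairs `{0, 1}` and `{2, 3}` have no `x y` term. -/
lemma exists_substitution_pairing [IsAlgClosed K] [NeZero (2 : K)] {r : Fin 4 → K}
    (hr : Function.Injective r) :
    ∃ a b c d : K, a * d - b * c ≠ 0 ∧ (∀ i, a - r i * c ≠ 0 ∧ b - r i * d ≠ 0) ∧
      (a - r 0 * c) * (b - r 1 * d) + (a - r 1 * c) * (b - r 0 * d) = 0 ∧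
      (a - r 2 * c) * (b - r 3 * d) + (a - r 3 * c) * (b - r 2 * d) = 0 := by
  by_cases hsum : r 0 + r 1 = r 2 + r 3
  · -- the involution is `z ↦ r₀ + r₁ - z`, with fixed points `B` and `∞`
    obtain ⟨B, hB⟩ : ∃ B, 2 * B = r 0 + r 1 := ⟨_, mul_div_cancel₀ _ two_ne_zero⟩
    have : r 0 ≠ r 1 := hr.ne (by decide)
    have : r 2 ≠ r 3 := hr.ne (by decide)
    refine ⟨-B, 1, -1, 0, by simp, fun i ↦ ⟨?_, by simp⟩, by linear_combination -hB,
      by linear_combination -hB - hsum⟩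
    fin_cases i <;> grind
  · obtain ⟨A, B, h₀₁, h₂₃⟩ := exists_isHarmonic_of_add_ne hsum
    obtain ⟨hAB, hrAB⟩ := h₀₁.nondegenerate hr h₂₃
    unfold IsHarmonic at h₀₁ h₂₃
    refine ⟨-B, -A, -1, -1, by grind, fun i ↦ ⟨?_, ?_⟩, by linear_combination h₀₁,
      by linear_combination h₂₃⟩ <;> grind

lemma exists_algEquiv_even_quartic_eq_normal_form [IsAlgClosed K] {α β : K} (hα : α ≠ 0)
    (hβ : β ≠ 0) (γ : K) :
    ∃ (a : K) (φ : MvPolynomial (Fin 2) K ≃ₐ[K] MvPolynomial (Fin 2) K),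
      φ (C α * X 0 ^ 4 + C γ * X 0 ^ 2 * X 1 ^ 2 + C β * X 1 ^ 4) =
        X 0 ^ 4 + C a * X 0 ^ 2 * X 1 ^ 2 + X 1 ^ 4 := by
  obtain ⟨u, hu⟩ := IsAlgClosed.exists_pow_nat_eq α⁻¹ four_pos
  obtain ⟨v, hv⟩ := IsAlgClosed.exists_pow_nat_eq β⁻¹ four_pos
  have hαu : C α * C u ^ 4 = (1 : MvPolynomial (Fin 2) K) := by
    rw [← C_pow, ← C_mul, hu, mul_inv_cancel₀ hα, C_1]
  have hβv : C β * C v ^ 4 = (1 : MvPolynomial (Fin 2) K) := by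
    rw [← C_pow, ← C_mul, hv, mul_inv_cancel₀ hβ, C_1]
  have huv : !![u, 0; 0, v].det ≠ 0 := by
    have : u ≠ 0 := by rintro rfl; simp [eq_comm, hα] at hu
    have : v ≠ 0 := by rintro rfl; simp [eq_comm, hβ] at hv
    simp_all
  refine ⟨γ * u ^ 2 * v ^ 2, linearSubstEquiv (.mkOfDetNeZero _ huv), ?_⟩
  simp only [linearSubstEquiv_apply, Matrix.GeneralLinearGroup.val_mkOfDetNeZero, map_add,
    map_mul, map_pow, algHom_C, algebraMap_eq, linearSubst_X, Matrix.of_apply, Matrix.cons_val',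
    Matrix.cons_val_fin_one, Matrix.cons_val_zero, Fin.sum_univ_two, Matrix.cons_val_one, C_0,
    zero_mul, add_zero, zero_add]
  linear_combination X 0 ^ 4 * hαu + X 1 ^ 4 * hβv

theorem exists_algEquiv_prod_X_sub_C_mul_X_eq_normal_form [IsAlgClosed K] [NeZero (2 : K)]
    {r : Fin 4 → K} (hr : Function.Injective r) :
    ∃ (a : K) (φ : MvPolynomial (Fin 2) K ≃ₐ[K] MvPolynomial (Fin 2) K),
      φ (∏ i, (X 0 - C (r i) * X 1)) = X 0 ^ 4 + C a * X 0 ^ 2 * X 1 ^ 2 + X 1 ^ 4 := by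
  obtain ⟨a, b, c, d, hdet, hne, h₀₁, h₂₃⟩ := exists_substitution_pairing hr
  have hM : !![a, b; c, d].det ≠ 0 := by simpa [Matrix.det_fin_two_of] using hdet
  obtain ⟨γ, heven⟩ := exists_linearSubst_prod_eq_even_quartic h₀₁ h₂₃
  obtain ⟨e, ψ, hψ⟩ := exists_algEquiv_even_quartic_eq_normal_form
    (Finset.prod_ne_zero_iff.2 fun i _ ↦ (hne i).1)
    (Finset.prod_ne_zero_iff.2 fun i _ ↦ (hne i).2) γ
  refine ⟨e, (linearSubstEquiv (.mkOfDetNeZero _ hM)).trans ψ, ?_⟩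
  rw [AlgEquiv.trans_apply, linearSubstEquiv_apply,
    Matrix.GeneralLinearGroup.val_mkOfDetNeZero, heven, hψ]

/-- Example 2.14: a squarefree member `x⁴ + ε x³y + y⁴` of the μ-constant stratum
of `X₉` is right-equivalent to a normal form equation `x⁴ + a x²y² + y⁴`. -/
theorem X9_member_equivalent_to_normal_form (ε : ℂ)
    (hsq : Squarefree (X 0 ^ 4 + C ε * X 0 ^ 3 * X 1 + X 1 ^ 4 : MvPolynomial (Fin 2) ℂ)) :
    ∃ (a : ℂ) (φ : MvPolynomial (Fin 2) ℂ ≃ₐ[ℂ] MvPolynomial (Fin 2) ℂ),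
      φ (X 0 ^ 4 + C ε * X 0 ^ 3 * X 1 + X 1 ^ 4) =
        X 0 ^ 4 + C a * X 0 ^ 2 * X 1 ^ 2 + X 1 ^ 4 := by
  obtain ⟨r, hr⟩ : ∃ r : Fin 4 → ℂ,
      (X 0 ^ 4 + C ε * X 0 ^ 3 * X 1 + X 1 ^ 4 : MvPolynomial (Fin 2) ℂ) =
        ∏ i, (X 0 - C (r i) * X 1) := by
    obtain ⟨r, hr⟩ := Polynomial.exists_homogenize_eq_prod_of_splits
      (p := Polynomial.X ^ 4 + Polynomial.C ε * Polynomial.X ^ 3 + 1) (n := 4)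
      (by monicity!) (IsAlgClosed.splits _) (by compute_degree!)
    refine ⟨r, hr ▸ ?_⟩
    simp only [Polynomial.homogenize_add, Polynomial.homogenize_X_pow, tsub_self, pow_zero,
      mul_one, Polynomial.homogenize_C_mul, Nat.reduceLeDiff, Nat.reduceSub, pow_one,
      Polynomial.homogenize_one, le_refl]
    ring
  rw [hr] at hsq ⊢
  exact exists_algEquiv_prod_X_sub_C_mul_X_eq_normal_form
    (injective_of_squarefree_prod_X_sub_C_mul_X hsq)
end
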